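/- For any circuit C and inputs ι, ι' ∈ BM^m, if ι' ∈ ResM(ι), then C_1(ι') ⊆ C_1(ι); i.e., partially stabilizing the input restricts the set of possible one-round outputs. -/

import Mathlib

set_option linter.unusedVariables false

attribute [local instance] Classical.propDecidable

/-- Signal values: stable `zero`, `one`, and metastable `meta`. -/
inductive BM : Type
  | zero
  | one
  | metastable
  deriving DecidableEq

/-- Embedding of stable Boolean values into `BM`. -/
def BM.ofBool : Bool → BM
  | false => BM.zero
  | true => BM.one

/-- `inResM x y` means `y ∈ ResM(x)`, the set of partial resolutions of `x`. -/
def inResM {k : ℕ} (x y : Fin k → BM) : Prop :=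
  ∀ i, x i = y i ∨ x i = BM.metastable

/-- `inRes x y` means `y ∈ Res(x)`, i.e. `y` is a complete (stable) resolution of `x`. -/
def inRes {k : ℕ} (x y : Fin k → BM) : Prop :=
  inResM x y ∧ ∀ i, y i ≠ BM.metastable

/-- The complete resolutions of `x`, viewed as Boolean words. -/
def boolRes {k : ℕ} (x : Fin k → BM) : Set (Fin k → Bool) :=
  { z | ∀ i, x i = BM.ofBool (z i) ∨ x i = BM.metastable }

/-- The metastable (Kleene) extension `f_M : BM^k → BM` of a Boolean function
`f : B^k → B`: it outputs a stable value `b` iff all complete resolutions of the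
input evaluate to `b` under `f`, and `meta` otherwise. -/
noncomputable def kleene {k : ℕ} (f : (Fin k → Bool) → Bool) (x : Fin k → BM) : BM :=
  if ∀ z ∈ boolRes x, f z = false then BM.zero
  else if ∀ z ∈ boolRes x, f z = true then BM.one
  else BM.metastable

/-- Combinational logic with `m` input nodes: formulas built from inputs,
`BM`-constants (gates of indegree 0), and gates computing the metastable extension
of a Boolean function of their in-neighbors.  (A DAG evaluates exactly like the
formula obtained by unsharing, so this faithfully captures evaluation of
combinational logic DAGs.) -/
inductive Comb (m : ℕ) : Type
  | input : Fin m → Comb m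
  | const : BM → Comb m
  | gate : (j : ℕ) → ((Fin j → Bool) → Bool) → (Fin j → Comb m) → Comb m

/-- Recursive evaluation of combinational logic on input `x ∈ BM^m`. -/
noncomputable def Comb.eval {m : ℕ} (x : Fin m → BM) : Comb m → BM
  | .input i => x i
  | .const b => b
  | .gate _ f cs => kleene f (fun t => (cs t).eval x)

/-- Register types: simple, mask-0, mask-1. -/
inductive RegType : Type
  | simple
  | mask0
  | mask1
  deriving DecidableEq

/-- `regRead t b (o, b')` holds iff a register of type `t` in state `b` can be read
with read value `o`, moving to state `b'`:  a register in a stable state yields that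
state and keeps it; a simple register in state `meta` yields `meta` and stays `meta`;
a mask-`c` register in state `meta` either yields `c` staying in state `meta`, or
yields `meta` changing its state to `1 - c`. -/
def regRead : RegType → BM → BM × BM → Prop
  | _, BM.zero, p => p = (BM.zero, BM.zero)
  | _, BM.one, p => p = (BM.one, BM.one)
  | RegType.simple, BM.metastable, p => p = (BM.metastable, BM.metastable)
  | RegType.mask0, BM.metastable, p => p = (BM.zero, BM.metastable) ∨ p = (BM.metastable, BM.one)
  | RegType.mask1, BM.metastable, p => p = (BM.one, BM.metastable) ∨ p = (BM.metastable, BM.zero)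

/-- A circuit with `m` input, `k` local and `n` output registers: a type for each
register, combinational logic with `m + k` input nodes (one per non-output register)
and `k + n` output nodes (one per non-input register), and an initialization of the
non-input registers. -/
structure Circuit (m k n : ℕ) : Type where
  inType : Fin m → RegType
  locType : Fin k → RegType
  outType : Fin n → RegType
  logic : Fin (k + n) → Comb (m + k)
  init : Fin (k + n) → BM

/-- A state of a circuit: values of input, local, and output registers. -/
structure CState (m k n : ℕ) : Type where
  inp : Fin m → BM
  loc : Fin k → BM
  out : Fin n → BM

/-- A state as a word in `BM^{m+k+n}`. -/
def CState.toVec {m k n : ℕ} (s : CState m k n) : Fin (m + (k + n)) → BM :=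
  Fin.append s.inp (Fin.append s.loc s.out)

/-- Read phase: `o ∈ BM^{m+k}` are possible read values of the non-output registers
in state `s`, and `ι'` the corresponding successor states of the input registers. -/
def ReadRel {m k n : ℕ} (C : Circuit m k n) (s : CState m k n)
    (o : Fin (m + k) → BM) (ι' : Fin m → BM) : Prop :=
  (∀ i : Fin m, regRead (C.inType i) (s.inp i) (o (Fin.castAdd k i), ι' i)) ∧
  (∀ j : Fin k, ∃ st', regRead (C.locType j) (s.loc j) (o (Fin.natAdd m j), st'))

/-- Evaluation phase: `f^G` applied to the read values. -/
noncomputable def evalLogic {m k n : ℕ} (C : Circuit m k n) (o : Fin (m + k) → BM) :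
    Fin (k + n) → BM :=
  fun j => (C.logic j).eval o

/-- `Write^C(s)`: possible values written to the non-input registers. -/
def WriteSet {m k n : ℕ} (C : Circuit m k n) (s : CState m k n) :
    Set (Fin (k + n) → BM) :=
  { w | ∃ o ι', ReadRel C s o ι' ∧ inResM (evalLogic C o) w }

/-- Successor-state relation: read all non-output registers, evaluate the logic,
and write an arbitrary partial resolution of the result to the non-input registers. -/
def Succ {m k n : ℕ} (C : Circuit m k n) (s s' : CState m k n) : Prop :=
  ∃ o ι', ReadRel C s o ι' ∧ s'.inp = ι' ∧
    inResM (evalLogic C o) (Fin.append s'.loc s'.out)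

/-- `reach C r s₀ = S^C_r(s₀)`: states reachable in `r` rounds from `s₀`. -/
def reach {m k n : ℕ} (C : Circuit m k n) : ℕ → CState m k n → Set (CState m k n)
  | 0, s => {s}
  | r + 1, s => { t | ∃ u ∈ reach C r s, Succ C u t }

/-- The initial state of `C` with input `ι`. -/
def initState {m k n : ℕ} (C : Circuit m k n) (ι : Fin m → BM) : CState m k n :=
  ⟨ι, fun j => C.init (Fin.castAdd n j), fun j => C.init (Fin.natAdd k j)⟩

/-- `C_r(ι)`: possible outputs after `r` rounds on input `ι`. -/
def Cout {m k n : ℕ} (C : Circuit m k n) (r : ℕ) (ι : Fin m → BM) :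
    Set (Fin n → BM) :=
  { y | ∃ s ∈ reach C r (initState C ι), y = s.out }

/-- `r` rounds of `C` implement `f` iff `C_r(ι) ⊆ f(ι)` for all inputs `ι`. -/
def Implements {m k n : ℕ} (C : Circuit m k n) (r : ℕ)
    (f : (Fin m → BM) → Set (Fin n → BM)) : Prop :=
  ∀ ι, Cout C r ι ⊆ f ι

/-- All registers of the circuit are simple. -/
def OnlySimple {m k n : ℕ} (C : Circuit m k n) : Prop :=
  (∀ i, C.inType i = RegType.simple) ∧ (∀ j, C.locType j = RegType.simple) ∧
    (∀ j, C.outType j = RegType.simple)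

/-- `Fun_S^r`: functions implementable by `r` rounds of circuits with only simple
registers. -/
def FunS (r m n : ℕ) : Set ((Fin m → BM) → Set (Fin n → BM)) :=
  { f | ∃ k, ∃ C : Circuit m k n, OnlySimple C ∧ Implements C r f }

/-- `Fun_M^r`: functions implementable by `r` rounds of circuits with arbitrary
register types. -/
def FunM (r m n : ℕ) : Set ((Fin m → BM) → Set (Fin n → BM)) :=
  { f | ∃ k, ∃ C : Circuit m k n, Implements C r f }

/-- A pivotal sequence over `BM^N`: consecutive elements differ in exactly one bit,
and that bit is `meta` in one of the two elements. -/
def PivotalSeq {N ℓ : ℕ} (x : Fin (ℓ + 1) → Fin N → BM) : Prop :=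
  ∀ i : Fin ℓ,
    ∃ j : Fin N,
      x i.castSucc j ≠ x i.succ j ∧
      (x i.castSucc j = BM.metastable ∨ x i.succ j = BM.metastable) ∧
      ∀ j' : Fin N, x i.castSucc j' ≠ x i.succ j' → j' = j

/-- A function `f : BM^m → Pow(BM^n)` is natural iff it is bit-wise and closed
(a product of component functions each taking values in `{{0}, {1}, BM}`)
and specific (stabilizing the input restricts the output). -/
def IsNatural {m n : ℕ} (f : (Fin m → BM) → Set (Fin n → BM)) : Prop :=
  (∃ g : Fin n → (Fin m → BM) → Set BM,
      (∀ i x, g i x = {BM.zero} ∨ g i x = {BM.one} ∨ g i x = (Set.univ : Set BM)) ∧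
      (∀ x, f x = { y | ∀ i, y i ∈ g i x })) ∧
  (∀ x y, inRes x y → f y ⊆ f x)

/-- The `i`-th component of the metastable closure of `f : B^m → B^n`. -/
noncomputable def mclosureC {m n : ℕ} (f : (Fin m → Bool) → Fin n → Bool)
    (x : Fin m → BM) (i : Fin n) : Set BM :=
  if ∀ z ∈ boolRes x, f z i = false then {BM.zero}
  else if ∀ z ∈ boolRes x, f z i = true then {BM.one}
  else Set.univ

/-- The metastable closure `[f]_M : BM^m → Pow(BM^n)` of `f : B^m → B^n`. -/
noncomputable def mclosure {m n : ℕ} (f : (Fin m → Bool) → Fin n → Bool)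
    (x : Fin m → BM) : Set (Fin n → BM) :=
  { y | ∀ i, y i ∈ mclosureC f x i }

/-!
A register in state `M` can always be read as `M`, whatever its type, so every read of the
registers in the initial state for `ι'` is matched by a read in the initial state for `ι` whose
values resolve to it. Kleene extensions are monotone under resolution, hence so is the
combinational logic, and any value the circuit may write on `ι'` may also be written on `ι`.
-/

lemma boolRes_nonempty {k : ℕ} (x : Fin k → BM) : (boolRes x).Nonempty := by
  refine ⟨fun i => x i = BM.one, fun i => ?_⟩
  cases hx : x i <;> simp [BM.ofBool, hx]

lemma inResM_refl {k : ℕ} (x : Fin k → BM) : inResM x x :=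
  fun _ => Or.inl rfl

lemma inResM_trans {k : ℕ} {x y z : Fin k → BM} (hxy : inResM x y) (hyz : inResM y z) :
    inResM x z := by
  intro i
  rcases hxy i with h | h
  · exact h ▸ hyz i
  · exact Or.inr h

lemma boolRes_anti {k : ℕ} {x y : Fin k → BM} (h : inResM x y) : boolRes y ⊆ boolRes x :=
  fun z hz => inResM_trans h hz

lemma kleene_inResM {k : ℕ} (f : (Fin k → Bool) → Bool) {x y : Fin k → BM}
    (h : inResM x y) : kleene f x = kleene f y ∨ kleene f x = BM.metastable := by
  have hsub := boolRes_anti h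
  obtain ⟨z, hz⟩ := boolRes_nonempty y
  by_cases h0 : ∀ z ∈ boolRes x, f z = false
  · left
    rw [kleene, kleene, if_pos h0, if_pos fun z hz => h0 z (hsub hz)]
  by_cases h1 : ∀ z ∈ boolRes x, f z = true
  · have h0' : ¬ ∀ z ∈ boolRes y, f z = false := fun h0' => by
      simpa [h1 z (hsub hz)] using h0' z hz
    left
    rw [kleene, kleene, if_neg h0, if_pos h1, if_neg h0', if_pos fun z hz => h1 z (hsub hz)]
  · right
    rw [kleene, if_neg h0, if_neg h1]

lemma Comb.eval_inResM {m : ℕ} {x y : Fin m → BM} (h : inResM x y) (c : Comb m) :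
    c.eval x = c.eval y ∨ c.eval x = BM.metastable := by
  induction c with
  | input i => exact h i
  | const b => exact Or.inl rfl
  | gate j f cs ih => exact kleene_inResM f ih

lemma evalLogic_inResM {m k n : ℕ} (C : Circuit m k n) {o o' : Fin (m + k) → BM}
    (h : inResM o o') : inResM (evalLogic C o) (evalLogic C o') :=
  fun j => (C.logic j).eval_inResM h

lemma regRead_metastable (t : RegType) : ∃ st, regRead t BM.metastable (BM.metastable, st) := by
  cases t
  exacts [⟨_, rfl⟩, ⟨_, Or.inr rfl⟩, ⟨_, Or.inr rfl⟩]

lemma regRead_exists_of_eq_or_metastable (t : RegType) {a b o st : BM}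
    (hab : a = b ∨ a = BM.metastable) (hr : regRead t b (o, st)) :
    ∃ o' st', regRead t a (o', st') ∧ (o' = o ∨ o' = BM.metastable) := by
  rcases hab with rfl | rfl
  · exact ⟨o, st, hr, Or.inl rfl⟩
  · obtain ⟨st', hst'⟩ := regRead_metastable t
    exact ⟨_, st', hst', Or.inr rfl⟩

lemma ReadRel.of_inResM {m k n : ℕ} (C : Circuit m k n) {s s' : CState m k n}
    (hinp : inResM s.inp s'.inp) (hloc : inResM s.loc s'.loc) {o : Fin (m + k) → BM}
    {ι' : Fin m → BM} (hr : ReadRel C s' o ι') :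
    ∃ o₀ ι₀, ReadRel C s o₀ ι₀ ∧ inResM o₀ o := by
  choose oi ι₀ hoi hoi_o using
    fun i => regRead_exists_of_eq_or_metastable _ (hinp i) (hr.1 i)
  have hlocRead : ∀ j, ∃ o', (∃ st', regRead (C.locType j) (s.loc j) (o', st')) ∧
      (o' = o (Fin.natAdd m j) ∨ o' = BM.metastable) := fun j => by
    obtain ⟨_, hst⟩ := hr.2 j
    obtain ⟨o', st', hrd, ho'⟩ := regRead_exists_of_eq_or_metastable _ (hloc j) hst
    exact ⟨o', ⟨st', hrd⟩, ho'⟩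
  choose ol hol hol_o using hlocRead
  refine ⟨Fin.addCases oi ol, ι₀, ⟨fun i => ?_, fun j => ?_⟩,
    Fin.addCases (fun i => ?_) (fun j => ?_)⟩
  · simpa using hoi i
  · simpa using hol j
  · simpa using hoi_o i
  · simpa using hol_o j

lemma Succ.exists_of_inResM {m k n : ℕ} (C : Circuit m k n) {s s' t : CState m k n}
    (hinp : inResM s.inp s'.inp) (hloc : inResM s.loc s'.loc) (ht : Succ C s' t) :
    ∃ t₀, Succ C s t₀ ∧ t₀.out = t.out := by
  obtain ⟨o, ι', hr, -, hw⟩ := ht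
  obtain ⟨o₀, ι₀, hr₀, ho₀⟩ := ReadRel.of_inResM C hinp hloc hr
  exact ⟨⟨ι₀, t.loc, t.out⟩,
    ⟨o₀, ι₀, hr₀, rfl, inResM_trans (evalLogic_inResM C ho₀) hw⟩, rfl⟩

/-- for any circuit `C`, if `ι' ∈ ResM(ι)` then `C_1(ι') ⊆ C_1(ι)`:
partially stabilizing the input restricts the possible one-round outputs. -/
theorem cout_one_monotone {m k n : ℕ} (C : Circuit m k n) (ι ι' : Fin m → BM)
    (h : inResM ι ι') :
    Cout C 1 ι' ⊆ Cout C 1 ι := by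
  rintro y ⟨t, ⟨_, rfl, ht⟩, rfl⟩
  obtain ⟨t₀, ht₀, hout⟩ :=
    Succ.exists_of_inResM (s := initState C ι) (s' := initState C ι') C h (inResM_refl _) ht
  exact ⟨t₀, ⟨_, rfl, ht₀⟩, hout.symm⟩
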